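/- arXiv:1603.04202 — 2 statements merged into one kernel-verified Lean document; each statement's English description precedes it below -/
import Mathlib

section
/- Let c ∈ ℝ, q ∈ [1,∞], and let f(x) = (1/2π) ∫_ℝ φ(v) x^{−c−iv} dv with φ ∈ L¹(ℝ) ∩ L^q(ℝ). If v ↦ v^r φ(v) belongs to L¹(ℝ) for some r ∈ ℕ, then f has Mellin derivatives up to order r, for each k = 0, 1, …, r the function Θ^k_c f is continuous on (0,∞) with x^c (Θ^k_c f)(x) → 0 as x → 0⁺ and as x → ∞, and (Θ^k_c f)(x) = ((−i)^k/2π) ∫_ℝ v^k φ(v) x^{−c−iv} dv for all x > 0. -/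
/-! In the logarithmic variable `t = log x`, the function `x ↦ x ^ c · thetaRep c φ k x` is
`t ↦ (-i)^k / 2π · 𝓕(v ↦ v^k φ v)(t / 2π)`, and the Mellin derivative `Θ_c` becomes `d/dt`.
Hence the Mellin derivatives are derivatives of a Fourier transform (differentiation under the
integral sign, which costs one power of `v`), continuity is that of the Fourier transform of an
`L¹` function, and the limits at `0⁺` and `∞` are the Riemann–Lebesgue lemma as `t → ∓∞`. -/

open MeasureTheory Real Set Filter
open scoped Topology ENNReal

noncomputable section

def MemXp (c p : ℝ) (f : ℝ → ℂ) : Prop :=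
  AEStronglyMeasurable f (volume.restrict (Set.Ioi 0)) ∧
    IntegrableOn (fun u : ℝ => ‖f u‖ ^ p * u ^ (c * p - 1)) (Set.Ioi 0)

def Xnorm (c p : ℝ) (f : ℝ → ℂ) : ℝ :=
  (∫ u in Set.Ioi (0:ℝ), ‖f u‖ ^ p * u ^ (c * p - 1)) ^ (1 / p)

def mellinT (c : ℝ) (f : ℝ → ℂ) (t : ℝ) : ℂ :=
  ∫ u in Set.Ioi (0:ℝ), f u * (u : ℂ) ^ ((c : ℂ) + (t : ℂ) * Complex.I - 1)

def mellinRep (c : ℝ) (φ : ℝ → ℂ) (x : ℝ) : ℂ :=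
  ((1 / (2 * π) : ℝ) : ℂ) * ∫ v : ℝ, φ v * (x : ℂ) ^ (-(c:ℂ) - (v:ℂ) * Complex.I)

def IsBernsteinPair (c σ p : ℝ) (g ψ : ℝ → ℂ) : Prop :=
  MemXp c p g ∧ ContinuousOn g (Set.Ioi 0) ∧ Integrable ψ ∧
    (∀ v : ℝ, σ < |v| → ψ v = 0) ∧ ∀ x ∈ Set.Ioi (0:ℝ), g x = mellinRep c ψ x

def mellinDist (c σ p : ℝ) (q : ℝ≥0∞) (φ : ℝ → ℂ) : ℝ≥0∞ :=
  sInf {d : ℝ≥0∞ | ∃ g ψ : ℝ → ℂ, IsBernsteinPair c σ p g ψ ∧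
    d = eLpNorm (fun v => φ v - ψ v) q volume}

def HasMellin2 (c : ℝ) (f g : ℝ → ℂ) : Prop :=
  Tendsto (fun ρ : ℝ => eLpNorm (fun t : ℝ =>
      g t - ∫ u in Set.Ioo (1/ρ) ρ, f u * (u : ℂ) ^ ((c:ℂ) + (t:ℂ) * Complex.I - 1)) 2 volume)
    atTop (𝓝 0)

def MemM1 (c : ℝ) (f : ℝ → ℂ) : Prop :=
  MemXp c 1 f ∧ ContinuousOn f (Set.Ioi 0) ∧ Integrable (mellinT c f)

def MemM2 (c : ℝ) (f g : ℝ → ℂ) : Prop :=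
  MemXp c 2 f ∧ ContinuousOn f (Set.Ioi 0) ∧ HasMellin2 c f g ∧ Integrable g

def Theta (c : ℝ) (f : ℝ → ℂ) : ℝ → ℂ := fun x => x * deriv f x + c * f x

def ThetaIter (c : ℝ) : ℕ → (ℝ → ℂ) → ℝ → ℂ
  | 0 => fun f => f
  | k+1 => fun f => Theta c (ThetaIter c k f)

def mellinDiff (c : ℝ) (r : ℕ) (h : ℝ) (f : ℝ → ℂ) (u : ℝ) : ℂ :=
  ∑ j ∈ Finset.range (r+1), ((-1:ℂ)) ^ (r-j) * (r.choose j : ℂ) *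
    ((h ^ ((j:ℝ) * c) : ℝ) : ℂ) * f (h ^ j * u)

def omegaMod (c p : ℝ) (r : ℕ) (f : ℝ → ℂ) (δ : ℝ) : ℝ :=
  sSup {w : ℝ | ∃ h : ℝ, 0 < h ∧ |Real.log h| ≤ δ ∧ w = Xnorm c p (mellinDiff c r h f)}

def LocAC (g : ℝ → ℂ) : Prop :=
  (∀ a b : ℝ, 0 < a → IntegrableOn (deriv g) (Set.Icc a b)) ∧
    ∀ a b : ℝ, 0 < a → a ≤ b → g b - g a = ∫ x in a..b, deriv g x

def MemW (c p : ℝ) (r : ℕ) (f g : ℝ → ℂ) : Prop :=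
  MemXp c p f ∧
    (∀ᵐ x ∂(volume.restrict (Set.Ioi 0)), f x = g x) ∧
    ContDiffOn ℝ (r - 1 : ℕ) g (Set.Ioi 0) ∧
    LocAC (iteratedDeriv (r-1) g) ∧
    MemXp c p (ThetaIter c r g)

def sinc (t : ℝ) : ℝ := if t = 0 then 1 else Real.sin (π * t) / (π * t)

def linc (c : ℝ) (x : ℝ) : ℝ := x ^ (-c) * _root_.sinc (Real.log x)


/-- `f` has Mellin derivative `L` at `x`, i.e. `lim_{h→1} (h^c f(hx) - f(x))/(h-1) = L`. -/
def HasMellinDerivAt (c : ℝ) (f : ℝ → ℂ) (x : ℝ) (L : ℂ) : Prop :=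
  Tendsto (fun h : ℝ => (((h:ℂ) ^ (c:ℂ)) * f (h * x) - f x) / ((h:ℂ) - 1))
    (𝓝[≠] (1:ℝ)) (𝓝 L)

/-- The candidate `k`-th Mellin derivative `((-i)^k/2π) ∫ v^k φ(v) x^{-c-iv} dv`. -/
def thetaRep (c : ℝ) (φ : ℝ → ℂ) (k : ℕ) (x : ℝ) : ℂ :=
  ((-Complex.I) ^ k / ((2 * π : ℝ) : ℂ)) *
    ∫ v : ℝ, (v:ℂ) ^ k * φ v * (x : ℂ) ^ (-(c:ℂ) - (v:ℂ) * Complex.I)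

open FourierTransform

theorem MeasureTheory.Integrable.pow_mul_of_le {μ : Measure ℝ} {φ : ℝ → ℂ} {k r : ℕ}
    (hφ : Integrable φ μ) (hr : Integrable (fun v : ℝ => (v : ℂ) ^ r * φ v) μ) (hk : k ≤ r) :
    Integrable (fun v : ℝ => (v : ℂ) ^ k * φ v) μ := by
  refine (hφ.norm.add hr.norm).mono'
    ((Complex.continuous_ofReal.pow k).aestronglyMeasurable.mul hφ.1) (ae_of_all _ fun v => ?_)
  have hpow : |v| ^ k ≤ 1 + |v| ^ r := by
    rcases le_or_gt |v| 1 with hv | hv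
    · linarith [pow_le_one₀ (n := k) (abs_nonneg v) hv, pow_nonneg (abs_nonneg v) r]
    · linarith [pow_le_pow_right₀ hv.le hk]
  simp only [norm_mul, norm_pow, Complex.norm_real, norm_eq_abs, Pi.add_apply]
  nlinarith [mul_le_mul_of_nonneg_right hpow (norm_nonneg (φ v))]

theorem hasMellinDerivAt_iff_hasDerivAt {c : ℝ} {f : ℝ → ℂ} {x : ℝ} {L : ℂ} :
    HasMellinDerivAt c f x L ↔ HasDerivAt (fun h : ℝ => (h : ℂ) ^ (c : ℂ) * f (h * x)) L 1 := by
  rw [hasDerivAt_iff_tendsto_slope, HasMellinDerivAt]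
  refine tendsto_congr fun h => ?_
  simp [slope_def_module, div_eq_inv_mul]

section LogProfile

variable {c : ℝ} {F G : ℝ → ℂ}

theorem rpow_mul_eq_of_eq_rpow_neg_mul_comp_log
    (hF : ∀ y, 0 < y → F y = ((y ^ (-c) : ℝ) : ℂ) * G (log y)) {x : ℝ} (hx : 0 < x) :
    ((x ^ c : ℝ) : ℂ) * F x = G (log x) := by
  rw [hF x hx, ← mul_assoc, ← Complex.ofReal_mul, ← rpow_add hx, add_neg_cancel, rpow_zero,
    Complex.ofReal_one, one_mul]

theorem continuousOn_of_eq_rpow_neg_mul_comp_log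
    (hF : ∀ y, 0 < y → F y = ((y ^ (-c) : ℝ) : ℂ) * G (log y)) (hG : Continuous G) :
    ContinuousOn F (Ioi 0) := by
  refine ContinuousOn.congr ?_ fun y (hy : 0 < y) => hF y hy
  refine ContinuousOn.mul ?_ (hG.comp_continuousOn (continuousOn_log.mono ?_))
  · exact Complex.continuous_ofReal.comp_continuousOn
      (continuousOn_id.rpow_const fun y hy => Or.inl (ne_of_gt hy))
  · exact fun y (hy : 0 < y) => hy.ne'

theorem tendsto_rpow_mul_of_eq_rpow_neg_mul_comp_log
    (hF : ∀ y, 0 < y → F y = ((y ^ (-c) : ℝ) : ℂ) * G (log y))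
    (hG : Tendsto G (cocompact ℝ) (𝓝 0)) {l : Filter ℝ} (hl : ∀ᶠ x in l, 0 < x)
    (hlog : Tendsto log l (cocompact ℝ)) :
    Tendsto (fun x : ℝ => ((x ^ c : ℝ) : ℂ) * F x) l (𝓝 0) :=
  (hG.comp hlog).congr' <| hl.mono fun _ hx =>
    (rpow_mul_eq_of_eq_rpow_neg_mul_comp_log hF hx).symm

theorem hasMellinDerivAt_of_eq_rpow_neg_mul_comp_log
    (hF : ∀ y, 0 < y → F y = ((y ^ (-c) : ℝ) : ℂ) * G (log y)) {x : ℝ} (hx : 0 < x) {G' : ℂ}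
    (hG : HasDerivAt G G' (log x)) :
    HasMellinDerivAt c F x (((x ^ (-c) : ℝ) : ℂ) * G') := by
  rw [hasMellinDerivAt_iff_hasDerivAt]
  have hlog : HasDerivAt (fun h => log h + log x) 1 1 := by
    simpa using (hasDerivAt_log one_ne_zero).add_const (log x)
  have hcomp : HasDerivAt (fun h => G (log h + log x)) G' 1 := by
    simpa [Function.comp_def] using HasDerivAt.scomp (g₁ := G) 1 (by simpa using hG) hlog
  refine (hcomp.const_mul _).congr_of_eventuallyEq ?_
  filter_upwards [eventually_gt_nhds one_pos] with h hh
  rw [hF _ (mul_pos hh hx), log_mul hh.ne' hx.ne', mul_rpow hh.le hx.le, ← mul_assoc,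
    Complex.ofReal_mul, ← mul_assoc, ← Complex.ofReal_cpow hh.le, ← Complex.ofReal_mul,
    ← rpow_add hh, add_neg_cancel, rpow_zero, Complex.ofReal_one, one_mul]

end LogProfile

def thetaRepLog (φ : ℝ → ℂ) (k : ℕ) (t : ℝ) : ℂ :=
  ((-Complex.I) ^ k / ((2 * π : ℝ) : ℂ)) * 𝓕 (fun v : ℝ => (v : ℂ) ^ k * φ v) (t / (2 * π))

-- The phase is written as in `Real.fourier_real_eq_integral_exp_smul`.
theorem cpow_neg_sub_mul_I {x : ℝ} (hx : 0 < x) (c v : ℝ) :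
    (x : ℂ) ^ (-(c : ℂ) - (v : ℂ) * Complex.I) =
      ((x ^ (-c) : ℝ) : ℂ) * Complex.exp (↑(-2 * π * v * (log x / (2 * π))) * Complex.I) := by
  rw [Complex.cpow_def_of_ne_zero (by exact_mod_cast hx.ne'), ← Complex.ofReal_log hx.le,
    rpow_def_of_pos hx, Complex.ofReal_exp, ← Complex.exp_add]
  congr 1
  field_simp
  push_cast
  ring

theorem thetaRep_eq_rpow_neg_mul_thetaRepLog (c : ℝ) (φ : ℝ → ℂ) (k : ℕ) {x : ℝ} (hx : 0 < x) :
    thetaRep c φ k x = ((x ^ (-c) : ℝ) : ℂ) * thetaRepLog φ k (log x) := by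
  simp only [thetaRep, thetaRepLog, fourier_real_eq_integral_exp_smul, cpow_neg_sub_mul_I hx,
    smul_eq_mul]
  rw [← integral_const_mul, ← integral_const_mul, ← integral_const_mul]
  congr 1
  ext v
  ring

theorem hasDerivAt_thetaRepLog {φ : ℝ → ℂ} {k : ℕ}
    (hk : Integrable fun v : ℝ => (v : ℂ) ^ k * φ v)
    (hk' : Integrable fun v : ℝ => (v : ℂ) ^ (k + 1) * φ v) (t : ℝ) :
    HasDerivAt (thetaRepLog φ k) (thetaRepLog φ (k + 1) t) t := by
  have hsmul : (fun v : ℝ => v • ((v : ℂ) ^ k * φ v)) = fun v : ℝ => (v : ℂ) ^ (k + 1) * φ v := by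
    ext v
    rw [Complex.real_smul, pow_succ]
    ring
  have hF := Real.hasDerivAt_fourier hk (hsmul ▸ hk') (t / (2 * π))
  have hdiv : HasDerivAt (fun t : ℝ => t / (2 * π)) (1 / (2 * π)) t :=
    (hasDerivAt_id t).div_const _
  refine ((hF.scomp t hdiv).const_mul ((-Complex.I) ^ k / ((2 * π : ℝ) : ℂ))).congr_deriv ?_
  have hmul : (fun v : ℝ => (-2 * π * Complex.I * v) • ((v : ℂ) ^ k * φ v)) =
      (-2 * π * Complex.I) • fun v : ℝ => (v : ℂ) ^ (k + 1) * φ v := by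
    ext v
    simp only [smul_eq_mul, Pi.smul_apply, pow_succ]
    ring
  have hscale (r : ℂ) (g : ℝ → ℂ) (w : ℝ) : 𝓕 (r • g) w = r * 𝓕 g w := by
    simp only [Real.fourier_eq, Pi.smul_apply, smul_comm _ r]
    exact integral_smul r _
  rw [thetaRepLog, hmul, hscale]
  simp only [Complex.real_smul]
  push_cast
  field_simp
  ring

theorem continuous_thetaRepLog {φ : ℝ → ℂ} {k : ℕ}
    (hk : Integrable fun v : ℝ => (v : ℂ) ^ k * φ v) : Continuous (thetaRepLog φ k) :=
  continuous_const.mul <| (VectorFourier.fourierIntegral_continuous Real.continuous_fourierChar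
    continuous_inner hk).comp (continuous_id.div_const _)

theorem tendsto_thetaRepLog_cocompact (φ : ℝ → ℂ) (k : ℕ) :
    Tendsto (thetaRepLog φ k) (cocompact ℝ) (𝓝 0) := by
  have hdiv : Tendsto (fun t : ℝ => t / (2 * π)) (cocompact ℝ) (cocompact ℝ) := by
    simpa [div_eq_mul_inv] using
      (Homeomorph.mulRight₀ (2 * π)⁻¹ (by positivity)).isClosedEmbedding.tendsto_cocompact
  have := ((Real.zero_at_infty_fourier fun v : ℝ => (v : ℂ) ^ k * φ v).comp hdiv).const_mul
    ((-Complex.I) ^ k / ((2 * π : ℝ) : ℂ))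
  rwa [mul_zero] at this

theorem mellin_derivative_representation_general
    (c : ℝ) (r : ℕ)
    (f φ : ℝ → ℂ) (hφ1 : Integrable φ)
    (hf : ∀ x ∈ Set.Ioi (0:ℝ), f x = mellinRep c φ x)
    (hr : Integrable fun v : ℝ => (v:ℂ) ^ r * φ v) :
    (∀ x ∈ Set.Ioi (0:ℝ), thetaRep c φ 0 x = f x) ∧
    (∀ k < r, ∀ x ∈ Set.Ioi (0:ℝ),
        HasMellinDerivAt c (thetaRep c φ k) x (thetaRep c φ (k+1) x)) ∧
    (∀ k ≤ r, ContinuousOn (thetaRep c φ k) (Set.Ioi 0) ∧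
        Tendsto (fun x : ℝ => ((x ^ c : ℝ) : ℂ) * thetaRep c φ k x) (𝓝[>] (0:ℝ)) (𝓝 0) ∧
        Tendsto (fun x : ℝ => ((x ^ c : ℝ) : ℂ) * thetaRep c φ k x) atTop (𝓝 0)) := by
  have hint (k : ℕ) (hk : k ≤ r) := hφ1.pow_mul_of_le hr hk
  have hrep (k : ℕ) (y : ℝ) (hy : 0 < y) := thetaRep_eq_rpow_neg_mul_thetaRepLog c φ k hy
  refine ⟨fun x hx => ?_, fun k hk x hx => ?_, fun k hk => ⟨?_, ?_, ?_⟩⟩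
  · rw [hf x hx, thetaRep, mellinRep]
    simp only [pow_zero, one_mul]
    push_cast
    ring
  · rw [hrep (k + 1) x hx]
    exact hasMellinDerivAt_of_eq_rpow_neg_mul_comp_log (hrep k) hx
      (hasDerivAt_thetaRepLog (hint k hk.le) (hint (k + 1) hk) (log x))
  · exact continuousOn_of_eq_rpow_neg_mul_comp_log (hrep k) (continuous_thetaRepLog (hint k hk))
  · exact tendsto_rpow_mul_of_eq_rpow_neg_mul_comp_log (hrep k)
      (tendsto_thetaRepLog_cocompact φ k) self_mem_nhdsWithin (tendsto_log_nhdsGT_zero.mono_right atBot_le_cocompact)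
  · exact tendsto_rpow_mul_of_eq_rpow_neg_mul_comp_log (hrep k)
      (tendsto_thetaRepLog_cocompact φ k) (eventually_gt_atTop 0) (tendsto_log_atTop.mono_right atTop_le_cocompact)

/-- Theorem 2: Mellin derivatives of functions in `G^q_c`. -/
theorem mellin_derivative_representation
    (c : ℝ) (q : ℝ≥0∞) (hq : 1 ≤ q) (r : ℕ)
    (f φ : ℝ → ℂ) (hφ1 : Integrable φ) (hφq : MemLp φ q volume)
    (hf : ∀ x ∈ Set.Ioi (0:ℝ), f x = mellinRep c φ x)
    (hr : Integrable fun v : ℝ => (v:ℂ) ^ r * φ v) :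
    (∀ x ∈ Set.Ioi (0:ℝ), thetaRep c φ 0 x = f x) ∧
    (∀ k < r, ∀ x ∈ Set.Ioi (0:ℝ),
        HasMellinDerivAt c (thetaRep c φ k) x (thetaRep c φ (k+1) x)) ∧
    (∀ k ≤ r, ContinuousOn (thetaRep c φ k) (Set.Ioi 0) ∧
        Tendsto (fun x : ℝ => ((x ^ c : ℝ) : ℂ) * thetaRep c φ k x) (𝓝[>] (0:ℝ)) (𝓝 0) ∧
        Tendsto (fun x : ℝ => ((x ^ c : ℝ) : ℂ) * thetaRep c φ k x) atTop (𝓝 0)) :=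
  mellin_derivative_representation_general c r f φ hφ1 hf hr
end
end

section
/- Let c ∈ ℝ, σ > 0, p ∈ [1,2], k ∈ ℕ, and let f(x) = (1/2π) ∫_ℝ φ(v) x^{−c−iv} dv where φ ∈ L¹(ℝ) ∩ L^∞(ℝ) is continuous. If v ↦ v^k φ(v) belongs to L¹(ℝ) ∩ L^∞(ℝ), then dist_∞(Θ^k_c f, B^p_{c,σ}) = sup_{|v| ≥ σ} |v^k φ(v)|. -/
open MeasureTheory Real Set Filter
open scoped Topology ENNReal

noncomputable section

/-! Write `θ v = (-i v)^k φ v` and let `S` be the supremum of `|θ|` over `|v| ≥ σ`.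
Every `ψ` of a Bernstein pair vanishes on the open set `|v| > σ`, so there `θ - ψ = θ`; as `θ` is
continuous, the essential supremum of `θ - ψ` dominates `|θ|` on the closure `|v| ≥ σ`.
Conversely, mollifying the truncation `θ · 1_[-(σ-δ), σ-δ]` with a bump of radius `δ` gives a
smooth `ψ` supported in `[-σ, σ]` with `|θ - ψ| ≤ S + ε`, by uniform continuity of `θ` on
`[-σ, σ]`. Its inverse Mellin transform is `x^(-c)` times a Schwartz function of `log x`, so the
substitution `x = e^t` puts it in `X^p_c`. -/

open scoped FourierTransform ContDiff SchwartzMap Convolution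

theorem closure_setOf_lt_abs (σ : ℝ) : closure {v : ℝ | σ < |v|} = {v | σ ≤ |v|} := by
  have hlt : {v : ℝ | σ < |v|} = Iio (-σ) ∪ Ioi σ := by
    ext v
    simp only [mem_ofPred_eq, mem_union, mem_Iio, mem_Ioi, lt_abs, lt_neg (a := σ), or_comm]
  have hle : {v : ℝ | σ ≤ |v|} = Iic (-σ) ∪ Ici σ := by
    ext v
    simp only [mem_ofPred_eq, mem_union, mem_Iic, mem_Ici, le_abs']
  rw [hlt, hle, closure_union, closure_Iio, closure_Ioi]

theorem enorm_le_eLpNorm_top_of_mem_closure {X E : Type*} [TopologicalSpace X]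
    [MeasurableSpace X] {μ : Measure X} [μ.IsOpenPosMeasure] [NormedAddCommGroup E]
    {f g : X → E} {U : Set X} (hg : Continuous g) (hU : IsOpen U) (hfg : EqOn f g U)
    {x : X} (hx : x ∈ closure U) : ‖g x‖ₑ ≤ eLpNorm f ⊤ μ := by
  have hdense : Dense {y | ‖f y‖ₑ ≤ eLpNorm f ⊤ μ} :=
    μ.dense_of_ae (by rw [eLpNorm_exponent_top]; exact ae_le_eLpNormEssSup)
  have hclosed : IsClosed {y | ‖g y‖ₑ ≤ eLpNorm f ⊤ μ} :=
    isClosed_le hg.enorm continuous_const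
  have hU_sub : U ⊆ {y | ‖g y‖ₑ ≤ eLpNorm f ⊤ μ} :=
    (hdense.open_subset_closure_inter hU).trans <|
      closure_minimal (fun y ⟨hyU, hy⟩ => by rwa [mem_ofPred_eq, ← hfg hyU]) hclosed
  exact closure_minimal hU_sub hclosed hx

theorem integrableOn_Ioi_zero_iff_integrable_exp_smul_comp_exp {E : Type*}
    [NormedAddCommGroup E] [NormedSpace ℝ E] (g : ℝ → E) :
    IntegrableOn g (Ioi 0) ↔ Integrable (fun t => exp t • g (exp t)) := by
  rw [← Real.range_exp, ← image_univ, ← integrableOn_univ (f := fun t => exp t • g (exp t))]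
  simpa [abs_of_pos (exp_pos _)] using integrableOn_image_iff_integrableOn_abs_deriv_smul
    MeasurableSet.univ (fun x _ ↦ (hasDerivAt_exp x).hasDerivWithinAt) exp_injective.injOn g

theorem MemXp.congr {c p : ℝ} {f g : ℝ → ℂ} (hf : MemXp c p f) (hfg : EqOn f g (Ioi 0)) :
    MemXp c p g := by
  have hae : f =ᵐ[volume.restrict (Ioi 0)] g :=
    (ae_restrict_iff' measurableSet_Ioi).2 (ae_of_all _ hfg)
  exact ⟨hf.1.congr hae, hf.2.congr_fun (fun x hx => by simp only [hfg hx]) measurableSet_Ioi⟩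

theorem continuousOn_cpow_mul_comp_log {G : ℝ → ℂ} (hG : Continuous G) (c : ℝ) :
    ContinuousOn (fun x : ℝ => (x : ℂ) ^ (-c : ℂ) * G (-log x)) (Ioi 0) := by
  intro x hx
  have hx0 : 0 < x := hx
  refine (ContinuousAt.mul ?_ ?_).continuousWithinAt
  · exact Complex.continuousAt_ofReal_cpow_const x _ (Or.inr hx0.ne')
  · exact hG.continuousAt.comp (continuousAt_log hx0.ne').neg

theorem memXp_cpow_mul_comp_log {c p : ℝ} (hp : 0 < p) {G : ℝ → ℂ} (hG : Continuous G)
    (hGp : MemLp G (ENNReal.ofReal p)) :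
    MemXp c p (fun x : ℝ => (x : ℂ) ^ (-c : ℂ) * G (-log x)) := by
  refine ⟨(continuousOn_cpow_mul_comp_log hG c).aestronglyMeasurable measurableSet_Ioi, ?_⟩
  rw [integrableOn_Ioi_zero_iff_integrable_exp_smul_comp_exp]
  have hGp' : Integrable (fun t => ‖G (-t)‖ ^ p) := by
    have := (hGp.integrable_norm_rpow (by simpa using hp) ENNReal.ofReal_ne_top).comp_neg
    simpa [ENNReal.toReal_ofReal hp.le] using this
  refine hGp'.congr (ae_of_all _ fun t => ?_)
  simp only [log_exp, smul_eq_mul, norm_mul]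
  rw [Complex.norm_cpow_eq_rpow_re_of_pos (exp_pos t),
    Real.mul_rpow (by positivity) (norm_nonneg _)]
  simp only [Complex.neg_re, Complex.ofReal_re, ← Real.exp_mul]
  have hexp : rexp t * rexp (t * -c * p) * rexp (t * (c * p - 1)) = 1 := by
    rw [← Real.exp_add, ← Real.exp_add, Real.exp_eq_one_iff]
    ring
  linear_combination (-‖G (-t)‖ ^ p) * hexp

theorem mellinRep_eq_mellinInv (c : ℝ) (ψ : ℝ → ℂ) :
    mellinRep c ψ = mellinInv c (fun s => ψ s.im) := by
  ext x
  simp [mellinRep, mellinInv, mul_comm, neg_add_eq_sub]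

theorem exists_schwartz_mellinRep_eq {ψ : ℝ → ℂ} (hψ : ContDiff ℝ ∞ ψ)
    (hψs : HasCompactSupport ψ) (c : ℝ) :
    ∃ G : 𝓢(ℝ, ℂ), ∀ x : ℝ, 0 < x → mellinRep c ψ x = (x : ℂ) ^ (-c : ℂ) * G (-log x) := by
  have hs : HasCompactSupport fun y : ℝ => ψ ((2 * π) • y) :=
    hψs.comp_smul (G₀ := ℝ) (by positivity)
  set F : 𝓢(ℝ, ℂ) := hs.toSchwartzMap (hψ.comp (contDiff_const_smul _))
  have hF : (fun y : ℝ => ψ ((c : ℂ) + 2 * π * y * Complex.I).im) = F := by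
    ext y
    simp [F]
  refine ⟨𝓕⁻ F, fun x hx => ?_⟩
  rw [SchwartzMap.fourierInv_coe, mellinRep_eq_mellinInv, mellinInv_eq_fourierInv c _ hx, hF,
    smul_eq_mul]

theorem isBernsteinPair_mellinRep {c σ p : ℝ} (hp : 0 < p) {ψ : ℝ → ℂ}
    (hψ : ContDiff ℝ ∞ ψ) (hψs : HasCompactSupport ψ) (hψσ : ∀ v, σ < |v| → ψ v = 0) :
    IsBernsteinPair c σ p (mellinRep c ψ) ψ := by
  obtain ⟨G, hG⟩ := exists_schwartz_mellinRep_eq hψ hψs c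
  have heq : EqOn (mellinRep c ψ) (fun x : ℝ => (x : ℂ) ^ (-c : ℂ) * G (-log x)) (Ioi 0) :=
    fun x hx => hG x hx
  exact ⟨(memXp_cpow_mul_comp_log hp G.continuous (G.memLp _)).congr heq.symm,
    (continuousOn_cpow_mul_comp_log G.continuous c).congr heq,
    hψ.continuous.integrable_of_hasCompactSupport hψs, hψσ, fun _ _ => rfl⟩

theorem exists_pos_norm_indicator_sub_le {θ : ℝ → ℂ} (hθ : Continuous θ) {σ S ε : ℝ}
    (hε : 0 < ε) (hS : ∀ v, σ ≤ |v| → ‖θ v‖ ≤ S) :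
    ∃ δ > 0, ∀ x v, |x - v| < δ → ‖(Icc (-(σ - δ)) (σ - δ)).indicator θ x - θ v‖ ≤ S + ε := by
  obtain ⟨δ₁, hδ₁, hθδ₁⟩ := Metric.uniformContinuousOn_iff_le.1
    ((isCompact_Icc (a := -σ) (b := σ)).uniformContinuousOn_of_continuous hθ.continuousOn) ε hε
  have hθK : ∀ x v, |x| ≤ σ → |v| ≤ σ → |x - v| ≤ δ₁ → ‖θ x - θ v‖ ≤ ε := fun x v hx hv hxv => by
    simpa [dist_eq_norm] using hθδ₁ x (abs_le.1 hx) v (abs_le.1 hv) hxv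
  have hS0 : 0 ≤ S := (norm_nonneg _).trans (hS σ (le_abs_self σ))
  have hnear : ∀ v, σ - δ₁ ≤ |v| → ‖θ v‖ ≤ S + ε := by
    intro v hv
    rcases le_or_gt σ |v| with h | h
    · linarith [hS v h]
    have hσ : |σ| = σ := abs_of_nonneg ((abs_nonneg v).trans h.le)
    obtain ⟨w, hw, hvw⟩ : ∃ w, |w| = σ ∧ |v - w| ≤ δ₁ := by
      rcases le_total 0 v with h0 | h0
      · refine ⟨σ, hσ, abs_le.2 ⟨?_, ?_⟩⟩ <;> linarith [abs_of_nonneg h0]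
      · refine ⟨-σ, by rw [abs_neg, hσ], abs_le.2 ⟨?_, ?_⟩⟩ <;> linarith [abs_of_nonpos h0]
    calc ‖θ v‖ ≤ ‖θ w‖ + ‖θ v - θ w‖ := norm_le_insert' _ _
      _ ≤ S + ε := add_le_add (hS w hw.ge) (hθK v w h.le hw.le hvw)
  refine ⟨δ₁ / 2, half_pos hδ₁, fun x v hxv => ?_⟩
  have hvx : |v| - |x| ≤ |x - v| := abs_sub_comm x v ▸ abs_sub_abs_le_abs_sub v x
  have hxv' : |x| - |v| ≤ |x - v| := abs_sub_abs_le_abs_sub x v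
  by_cases hx : x ∈ Icc (-(σ - δ₁ / 2)) (σ - δ₁ / 2)
  · rw [indicator_of_mem hx]
    have hx' := abs_le.2 hx
    linarith [hθK x v (by linarith) (by linarith) (by linarith)]
  · rw [indicator_of_notMem hx, zero_sub, norm_neg]
    have hx' : σ - δ₁ / 2 < |x| := not_le.1 fun h => hx (abs_le.1 h)
    exact hnear v (by linarith)

theorem exists_contDiff_hasCompactSupport_norm_sub_le {θ : ℝ → ℂ} (hθ : Continuous θ)
    {σ S ε : ℝ} (hε : 0 < ε) (hS : ∀ v, σ ≤ |v| → ‖θ v‖ ≤ S) :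
    ∃ ψ : ℝ → ℂ, ContDiff ℝ ∞ ψ ∧ HasCompactSupport ψ ∧ (∀ v, σ < |v| → ψ v = 0) ∧
      ∀ v, ‖θ v - ψ v‖ ≤ S + ε := by
  obtain ⟨δ, hδ, hη⟩ := exists_pos_norm_indicator_sub_le hθ hε hS
  set η := (Icc (-(σ - δ)) (σ - δ)).indicator θ
  have hηi : Integrable η := (integrable_indicator_iff measurableSet_Icc).2 hθ.integrableOn_Icc
  set F : ContDiffBump (0 : ℝ) := ⟨δ / 2, δ, half_pos hδ, half_lt_self hδ⟩
  refine ⟨F.normed volume ⋆[ContinuousLinearMap.lsmul ℝ ℝ, volume] η,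
    F.hasCompactSupport_normed.contDiff_convolution_left _ F.contDiff_normed hηi.locallyIntegrable,
    F.hasCompactSupport_normed.convolution _
      (HasCompactSupport.intro isCompact_Icc fun x hx => indicator_of_notMem hx _),
    fun v hv => Function.notMem_support.1 fun hmem => ?_, fun v => ?_⟩
  · obtain ⟨s, hs, t, ht, rfl⟩ := support_convolution_subset _ hmem
    rw [F.support_normed_eq, Metric.mem_ball, Real.dist_eq, sub_zero] at hs
    have ht' : t ∈ Icc (-(σ - δ)) (σ - δ) := support_indicator_subset ht
    linarith [abs_add_le s t, abs_le.2 ht']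
  · have hSε : 0 ≤ S + ε := by linarith [(norm_nonneg _).trans (hS σ (le_abs_self σ))]
    rw [← dist_eq_norm, dist_comm]
    exact dist_convolution_le hSε F.support_normed_eq.subset F.nonneg_normed F.integral_normed
      hηi.aestronglyMeasurable fun x hx => by
        rw [dist_eq_norm]; exact hη x v (by rwa [Metric.mem_ball, Real.dist_eq] at hx)

theorem enorm_le_mellinDist_top {c σ p : ℝ} {θ : ℝ → ℂ} (hθ : Continuous θ) {v : ℝ}
    (hv : σ ≤ |v|) : ‖θ v‖ₑ ≤ mellinDist c σ p ⊤ θ := by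
  refine le_sInf ?_
  rintro _ ⟨g, ψ, ⟨-, -, -, hψσ, -⟩, rfl⟩
  exact enorm_le_eLpNorm_top_of_mem_closure hθ (isOpen_lt continuous_const continuous_abs)
    (fun w hw => by simp [hψσ w hw]) (by rwa [closure_setOf_lt_abs])

theorem mellinDist_top_le {c σ p : ℝ} (hp : 0 < p) {θ : ℝ → ℂ} (hθ : Continuous θ) {S : ℝ}
    (hS : ∀ v, σ ≤ |v| → ‖θ v‖ ≤ S) : mellinDist c σ p ⊤ θ ≤ ENNReal.ofReal S := by
  refine ENNReal.le_of_forall_pos_le_add fun ε hε _ => ?_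
  obtain ⟨ψ, hψ, hψs, hψσ, hθψ⟩ :=
    exists_contDiff_hasCompactSupport_norm_sub_le hθ (ε := ε) hε hS
  have hS0 : 0 ≤ S := (norm_nonneg _).trans (hS σ (le_abs_self σ))
  calc mellinDist c σ p ⊤ θ ≤ eLpNorm (fun v => θ v - ψ v) ⊤ volume :=
        sInf_le ⟨_, ψ, isBernsteinPair_mellinRep hp hψ hψs hψσ, rfl⟩
    _ ≤ ENNReal.ofReal (S + ε) := by
        rw [eLpNorm_exponent_top]
        exact eLpNormEssSup_le_of_ae_bound (ae_of_all _ hθψ)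
    _ = ENNReal.ofReal S + ε := by
        rw [ENNReal.ofReal_add hS0 ε.coe_nonneg, ENNReal.ofReal_coe_nnreal]

/-- `Θ^k_c f` is represented by `v ↦ (-iv)^k φ(v)`, so its distance from `B^p_{c,σ}` is the
`mellinDist` of that function. -/
theorem mellin_distance_deriv_inf_general
    (c σ p : ℝ) (hp : p ∈ Set.Icc (1:ℝ) 2) (k : ℕ)
    (φ : ℝ → ℂ) (hφc : Continuous φ)
    (hk_inf : MemLp (fun v : ℝ => (v:ℂ) ^ k * φ v) ⊤) :
    mellinDist c σ p ⊤ (fun v : ℝ => (-Complex.I * (v:ℂ)) ^ k * φ v)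
      = ENNReal.ofReal (⨆ v : {v : ℝ // σ ≤ |v|}, ‖((v:ℝ):ℂ) ^ k * φ (v:ℝ)‖) := by
  set θ : ℝ → ℂ := fun v => (-Complex.I * v) ^ k * φ v
  have hθ : Continuous θ := by fun_prop
  have hnorm (v : ℝ) : ‖θ v‖ = ‖(v : ℂ) ^ k * φ v‖ := by simp [θ]
  have hbdd : BddAbove (range fun v : {v : ℝ // σ ≤ |v|} => ‖((v : ℝ) : ℂ) ^ k * φ v‖) := by
    refine ⟨(eLpNorm (fun v : ℝ => (v : ℂ) ^ k * φ v) ⊤ volume).toReal,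
      forall_mem_range.2 fun v => ?_⟩
    rw [← ENNReal.ofReal_le_iff_le_toReal hk_inf.eLpNorm_ne_top, ofReal_norm]
    exact enorm_le_eLpNorm_top_of_mem_closure (by fun_prop) isOpen_univ (eqOn_refl _ _)
      (by simp)
  have hle := mellinDist_top_le (c := c) (p := p) (zero_lt_one.trans_le hp.1) hθ
    fun v hv => (hnorm v).trans_le (le_ciSup hbdd ⟨v, hv⟩)
  refine le_antisymm hle ?_
  have hfin := ne_top_of_le_ne_top ENNReal.ofReal_ne_top hle
  have : Nonempty {v : ℝ // σ ≤ |v|} := ⟨⟨σ, le_abs_self σ⟩⟩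
  rw [ENNReal.ofReal_le_iff_le_toReal hfin]
  refine ciSup_le fun v => ?_
  rw [← hnorm, ← ENNReal.ofReal_le_iff_le_toReal hfin, ofReal_norm]
  exact enorm_le_mellinDist_top hθ v.2

/-- Corollary 1, q = ∞: distance of Mellin derivatives from the
Bernstein space. `Θ^k_c f` has representing function `v ↦ (-iv)^k φ(v)`. -/
theorem mellin_distance_deriv_inf
    (c σ p : ℝ) (hσ : 0 < σ) (hp : p ∈ Set.Icc (1:ℝ) 2) (k : ℕ)
    (f φ : ℝ → ℂ) (hφ1 : Integrable φ) (hphi_inf : MemLp φ ⊤) (hφc : Continuous φ)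
    (hf : ∀ x ∈ Set.Ioi (0:ℝ), f x = mellinRep c φ x)
    (hk1 : Integrable fun v : ℝ => (v:ℂ) ^ k * φ v)
    (hk_inf : MemLp (fun v : ℝ => (v:ℂ) ^ k * φ v) ⊤) :
    mellinDist c σ p ⊤ (fun v : ℝ => (-Complex.I * (v:ℂ)) ^ k * φ v)
      = ENNReal.ofReal (⨆ v : {v : ℝ // σ ≤ |v|}, ‖((v:ℝ):ℂ) ^ k * φ (v:ℝ)‖) :=
  mellin_distance_deriv_inf_general c σ p hp k φ hφc hk_inf
end
end
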